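/- Let ν > 0 and let (α_k)_{k∈ℕ} be the Taylor coefficients at 0 of t ↦ exp(−ν · arccos t), i.e. exp(−ν · arccos t) = ∑_{k=0}^∞ α_k t^k for t ∈ (−1,1). Then for every k ∈ ℕ, α_k = C(ν,k) · (2^k / k!) · |Γ((k + iν)/2)|², where C(ν,k) = ν e^{−πν/2} sinh(πν/2)/(2π) if k is even and C(ν,k) = ν e^{−πν/2} cosh(πν/2)/(2π) if k is odd, and Γ denotes the complex Gamma function. -/

import Mathlib

open Real Complex
open FormalMultilinearSeries

lemma aux_onBall (c : ℕ → ℝ) (g : ℝ → ℝ)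
    (h : ∀ t ∈ Set.Ioo (-1:ℝ) 1, HasSum (fun n => c n * t ^ n) (g t)) :
    HasFPowerSeriesOnBall g (ofScalars ℝ c) 0 1 := by
  constructor
  · refine ENNReal.le_of_forall_nnreal_lt fun s hs => ?_
    have hs1 : (s:ℝ) < 1 := by exact_mod_cast hs
    have hmem : (s:ℝ) ∈ Set.Ioo (-1:ℝ) 1 := ⟨by nlinarith [s.coe_nonneg], hs1⟩
    have hsum := (h s hmem).summable
    refine le_radius_of_tendsto _ (l := 0) ?_
    have h2 : Filter.Tendsto (fun n => |c n * (s:ℝ)^n|) Filter.atTop (nhds 0) := by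
      simpa using hsum.tendsto_atTop_zero.abs
    refine h2.congr fun n => ?_
    rw [abs_mul, _root_.abs_pow, _root_.abs_of_nonneg s.coe_nonneg, ofScalars_norm, Real.norm_eq_abs]
  · exact one_pos
  · intro y hy
    have hy1 : |y| < 1 := by
      simpa [← ofReal_norm, ENNReal.ofReal_lt_one, Real.norm_eq_abs] using
        (EMetric.mem_ball.1 hy)
    have := h y ⟨neg_lt_of_abs_lt hy1, lt_of_abs_lt hy1⟩
    simpa only [ofScalars_apply_eq, smul_eq_mul, zero_add] using this

lemma aux_derivSeries_apply (c : ℕ → ℝ) (n : ℕ) (x : ℝ) :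
    (ofScalars ℝ c).derivSeries n (fun _ => x) 1 = ((n:ℝ)+1) * c (n+1) * x^n := by
  rcases eq_or_ne x 0 with rfl | hx
  · cases n with
    | zero =>
      have he : (fun _ : Fin 0 => (0:ℝ)) = (fun _ : Fin 0 => (1:ℝ)) := funext fun i => i.elim0
      rw [he, derivSeries_apply_diag, ofScalars_apply_eq]
      simp
    | succ m =>
      have h0 : ((ofScalars ℝ c).derivSeries (m+1)) (fun _ => (0:ℝ)) = 0 :=
        ContinuousMultilinearMap.map_coord_zero _ (0 : Fin (m+1)) rfl
      rw [h0]
      simp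
  · set A := (ofScalars ℝ c).derivSeries n (fun _ => x) with hAdef
    have hA : A x = x * A 1 := by
      have h1 : A x = A (x • (1:ℝ)) := by norm_num
      rw [h1, map_smul, smul_eq_mul]
    rw [hAdef, derivSeries_apply_diag, ofScalars_apply_eq] at hA
    apply mul_left_cancel₀ hx
    rw [← hA]
    simp only [smul_eq_mul, nsmul_eq_mul]
    push_cast
    ring

lemma aux_hasSum_deriv (c : ℕ → ℝ) (g : ℝ → ℝ)
    (h : ∀ t ∈ Set.Ioo (-1:ℝ) 1, HasSum (fun n => c n * t ^ n) (g t)) :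
    ∀ t ∈ Set.Ioo (-1:ℝ) 1, HasSum (fun n : ℕ => ((n:ℝ)+1) * c (n+1) * t ^ n) (deriv g t) := by
  intro t ht
  have hp := (aux_onBall c g h).fderiv
  have htm : t ∈ Metric.eball (0:ℝ) 1 := by
    rw [Metric.mem_eball, edist_zero_right]
    have h1 : |t| < 1 := abs_lt.2 ⟨ht.1, ht.2⟩
    simpa [← ofReal_norm, ENNReal.ofReal_lt_one, Real.norm_eq_abs] using h1
  have hs := (hp.hasSum htm).mapL (ContinuousLinearMap.apply ℝ ℝ (1:ℝ))
  simp only [ContinuousLinearMap.apply_apply, zero_add] at hs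
  have hterm : (fun n => ((ofScalars ℝ c).derivSeries n fun _ => t) 1)
      = fun n : ℕ => ((n:ℝ)+1) * c (n+1) * t ^ n := funext fun n => aux_derivSeries_apply c n t
  rw [hterm] at hs
  rwa [show (fderiv ℝ g t) 1 = deriv g t from rfl] at hs

lemma aux_coeff_zero (c : ℕ → ℝ)
    (h : ∀ t ∈ Set.Ioo (-1:ℝ) 1, HasSum (fun n => c n * t ^ n) 0) :
    ∀ n, c n = 0 := by
  have hp := (aux_onBall c 0 (by intro t ht; simpa using h t ht)).hasFPowerSeriesAt.eq_zero
  intro n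
  have h0 : ofScalars ℝ c n = 0 := by rw [hp]; rfl
  exact (ofScalars_eq_zero ℝ n).1 h0

lemma aux_hasDerivAt_f (ν : ℝ) {t : ℝ} (ht : t ∈ Set.Ioo (-1:ℝ) 1) :
    HasDerivAt (fun x => Real.exp (-ν * Real.arccos x))
      (ν * (Real.sqrt (1 - t^2))⁻¹ * Real.exp (-ν * Real.arccos t)) t := by
  have h1 : t ≠ -1 := ne_of_gt ht.1
  have h2 : t ≠ 1 := ne_of_lt ht.2
  have ha := ((Real.hasDerivAt_arccos h1 h2).const_mul (-ν)).exp
  convert ha using 1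
  field_simp

lemma aux_hasDerivAt_E (ν : ℝ) {t : ℝ} (ht : t ∈ Set.Ioo (-1:ℝ) 1) :
    HasDerivAt (fun x => ν * (Real.sqrt (1 - x^2))⁻¹ * Real.exp (-ν * Real.arccos x))
      ((ν * t * ((Real.sqrt (1 - t^2))⁻¹)^3 + ν^2 * ((Real.sqrt (1 - t^2))⁻¹)^2)
        * Real.exp (-ν * Real.arccos t)) t := by
  have hpos : 0 < 1 - t^2 := by nlinarith [ht.1, ht.2]
  have hs : 0 < Real.sqrt (1 - t^2) := Real.sqrt_pos.2 hpos
  have hs2 : Real.sqrt (1 - t^2) ^ 2 = 1 - t^2 := Real.sq_sqrt hpos.le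
  have hq : HasDerivAt (fun x : ℝ => 1 - x^2) (-(2*t)) t := by
    simpa using ((hasDerivAt_pow 2 t).const_sub 1)
  have hsq : HasDerivAt (fun x => Real.sqrt (1 - x^2)) (-(2*t) / (2 * Real.sqrt (1-t^2))) t :=
    hq.sqrt hpos.ne'
  have hinv : HasDerivAt (fun x => (Real.sqrt (1 - x^2))⁻¹)
      (-(-(2*t) / (2 * Real.sqrt (1-t^2))) / (Real.sqrt (1-t^2))^2) t := hsq.inv hs.ne'
  have hu := hinv.const_mul ν
  have hE := hu.mul (aux_hasDerivAt_f ν ht)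
  have key : ∀ s : ℝ, s ≠ 0 → ∀ e : ℝ,
      ν * (-(-(2 * t) / (2 * s)) / s ^ 2) * e + ν * s⁻¹ * (ν * s⁻¹ * e)
        = (ν * t * (s⁻¹)^3 + ν^2 * (s⁻¹)^2) * e := by
    intro s hs0 e
    field_simp
  rwa [key _ hs.ne' (Real.exp (-ν * Real.arccos t))] at hE

lemma aux_alpha_rec (ν : ℝ) (α : ℕ → ℝ)
    (hα : ∀ t ∈ Set.Ioo (-1 : ℝ) 1,
      HasSum (fun k : ℕ => α k * t ^ k) (Real.exp (-ν * Real.arccos t))) :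
    ∀ n : ℕ, ((n:ℝ)+2)*((n:ℝ)+1)*α (n+2) - ((n:ℝ)^2 + ν^2) * α n = 0 := by
  have H1 := aux_hasSum_deriv α _ hα
  have H1' : ∀ t ∈ Set.Ioo (-1:ℝ) 1,
      HasSum (fun n : ℕ => (fun k : ℕ => ((k:ℝ)+1) * α (k+1)) n * t ^ n)
        ((fun x => ν * (Real.sqrt (1 - x^2))⁻¹ * Real.exp (-ν * Real.arccos x)) t) := by
    intro t ht
    have h := H1 t ht
    rwa [(aux_hasDerivAt_f ν ht).deriv] at h
  have H2 := aux_hasSum_deriv _ _ H1'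
  apply aux_coeff_zero
  intro t ht
  have hpos : 0 < 1 - t^2 := by nlinarith [ht.1, ht.2]
  have hs : 0 < Real.sqrt (1 - t^2) := Real.sqrt_pos.2 hpos
  have hs2 : Real.sqrt (1 - t^2) ^ 2 = 1 - t^2 := Real.sq_sqrt hpos.le
  set s := Real.sqrt (1 - t^2) with hsdef
  set ft := Real.exp (-ν * Real.arccos t) with hftdef
  set D := (ν * t * (s⁻¹)^3 + ν^2 * (s⁻¹)^2) * ft with hDdef
  set E := ν * s⁻¹ * ft with hEdef
  have hA : HasSum (fun n : ℕ => ((n:ℝ)+2) * ((n:ℝ)+1) * α (n+2) * t^n) D := by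
    have h := H2 t ht
    rw [(aux_hasDerivAt_E ν ht).deriv] at h
    have hfun : (fun n : ℕ => ((n:ℝ)+1) * ((fun k : ℕ => ((k:ℝ)+1) * α (k+1)) (n+1)) * t^n)
        = (fun n : ℕ => ((n:ℝ)+2) * ((n:ℝ)+1) * α (n+2) * t^n) := by
      funext n; push_cast; ring
    rwa [hfun] at h
  have hE1 : HasSum (fun n : ℕ => ((n:ℝ)+1) * α (n+1) * t^n) E := H1' t ht
  have hF : HasSum (fun n : ℕ => α n * t^n) ft := hα t ht
  have hB : HasSum (fun m : ℕ => (m:ℝ) * ((m:ℝ)-1) * α m * t^m) (D * t^2) := by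
    have h0 := hA.mul_right (t^2)
    have hfun : (fun n : ℕ => ((n:ℝ)+2) * ((n:ℝ)+1) * α (n+2) * t^n * t^2)
        = (fun n : ℕ => (fun m : ℕ => (m:ℝ) * ((m:ℝ)-1) * α m * t^m) (n+2)) := by
      funext n; push_cast; ring
    rw [hfun] at h0
    have h1 := (hasSum_nat_add_iff (f := fun m : ℕ => (m:ℝ) * ((m:ℝ)-1) * α m * t^m) 2).1 h0
    simpa [Finset.sum_range_succ] using h1
  have hC : HasSum (fun m : ℕ => (m:ℝ) * α m * t^m) (E * t) := by
    have h0 := hE1.mul_right t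
    have hfun : (fun n : ℕ => ((n:ℝ)+1) * α (n+1) * t^n * t)
        = (fun n : ℕ => (fun m : ℕ => (m:ℝ) * α m * t^m) (n+1)) := by
      funext n; push_cast; ring
    rw [hfun] at h0
    have h1 := (hasSum_nat_add_iff (f := fun m : ℕ => (m:ℝ) * α m * t^m) 1).1 h0
    simpa [Finset.sum_range_succ] using h1
  have htot := ((hA.sub hB).sub hC).sub (hF.mul_left (ν^2))
  have hval : D - D * t^2 - E * t - ν^2 * ft = 0 := by
    have key : ∀ u v : ℝ, u ≠ 0 → u^2 = 1 - t^2 →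
        ((ν * t * (u⁻¹)^3 + ν^2 * (u⁻¹)^2) * v) - ((ν * t * (u⁻¹)^3 + ν^2 * (u⁻¹)^2) * v) * t^2
          - (ν * u⁻¹ * v) * t - ν^2 * v = 0 := by
      intro u v hu0 hu2
      have ht2 : t^2 = 1 - u^2 := by linarith
      rw [ht2]
      field_simp
      ring
    exact key s ft hs.ne' hs2
  have hfun : (fun n : ℕ => (((n:ℝ)+2)*((n:ℝ)+1)*α (n+2) - ((n:ℝ)^2 + ν^2) * α n) * t^n)
      = (fun n : ℕ => ((n:ℝ)+2) * ((n:ℝ)+1) * α (n+2) * t^n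
          - (n:ℝ) * ((n:ℝ)-1) * α n * t^n - (n:ℝ) * α n * t^n - ν^2 * (α n * t^n)) := by
    funext n; ring
  rw [hfun]
  rwa [hval] at htot

lemma aux_alpha01 (ν : ℝ) (α : ℕ → ℝ)
    (hα : ∀ t ∈ Set.Ioo (-1 : ℝ) 1,
      HasSum (fun k : ℕ => α k * t ^ k) (Real.exp (-ν * Real.arccos t))) :
    α 0 = Real.exp (-ν * (π/2)) ∧ α 1 = ν * Real.exp (-ν * (π/2)) := by
  have h0mem : (0:ℝ) ∈ Set.Ioo (-1:ℝ) 1 := by norm_num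
  constructor
  · have h := hα 0 h0mem
    have hsingle : HasSum (fun k : ℕ => α k * (0:ℝ) ^ k) (α 0 * (0:ℝ)^0) :=
      hasSum_single 0 (by intro b hb; simp [zero_pow hb])
    have := hsingle.unique h
    simpa [Real.arccos_zero] using this
  · have h := aux_hasSum_deriv α _ hα 0 h0mem
    rw [(aux_hasDerivAt_f ν h0mem).deriv] at h
    have hsingle : HasSum (fun n : ℕ => ((n:ℝ)+1) * α (n+1) * (0:ℝ) ^ n)
        ((((0:ℕ):ℝ)+1) * α 1 * (0:ℝ)^0) :=
      hasSum_single 0 (by intro b hb; simp [zero_pow hb])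
    have := hsingle.unique h
    simpa [Real.arccos_zero] using this

lemma aux_gammarec (ν : ℝ) (hν : 0 < ν) (k : ℕ) :
    ‖Complex.Gamma ((((k:ℕ)+2 : ℂ) + ν * Complex.I) / 2)‖ ^ 2
      = (((k:ℝ)^2 + ν^2)/4) * ‖Complex.Gamma (((k : ℂ) + ν * Complex.I) / 2)‖ ^ 2 := by
  have hz0 : ((k : ℂ) + ν * Complex.I)/2 ≠ 0 := by
    intro h
    have := congrArg Complex.im h
    simp at this
    exact hν.ne' this
  have hshift : (((k:ℕ)+2 : ℂ) + ν * Complex.I)/2 = ((k:ℂ) + ν * Complex.I)/2 + 1 := by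
    push_cast; ring
  rw [hshift, Complex.Gamma_add_one _ hz0, norm_mul, mul_pow]
  congr 1
  have hz : ((k:ℂ) + ν * Complex.I)/2 = (((k:ℝ)/2 : ℝ) : ℂ) + (((ν/2 : ℝ)) : ℂ) * Complex.I := by
    push_cast; ring
  rw [hz, Complex.sq_norm, Complex.normSq_add_mul_I]
  ring

lemma aux_gamma0 (ν : ℝ) (hν : 0 < ν) :
    ‖Complex.Gamma ((↑ν * Complex.I) / 2)‖ ^ 2
      = 2 * π / (ν * Real.sinh (π * ν / 2)) := by
  set z : ℂ := (↑ν * Complex.I) / 2 with hzdef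
  set A : ℝ := ‖Complex.Gamma z‖ ^ 2 with hAdef
  have hν' : (ν:ℂ) ≠ 0 := Complex.ofReal_ne_zero.2 hν.ne'
  have hneg : -z ≠ 0 := by
    simp only [hzdef, neg_ne_zero, div_ne_zero_iff]
    exact ⟨mul_ne_zero hν' Complex.I_ne_zero, two_ne_zero⟩
  have hc2 : (starRingEnd ℂ) 2 = 2 := map_ofNat _ 2
  have hconj : (starRingEnd ℂ) z = -z := by
    simp only [hzdef, map_div₀, map_mul, Complex.conj_ofReal, Complex.conj_I, hc2]
    ring
  have h1 : Complex.Gamma (1 - z) = -z * Complex.Gamma (-z) := by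
    rw [show (1:ℂ) - z = -z + 1 by ring, Complex.Gamma_add_one _ hneg]
  have h2 : Complex.Gamma (-z) = (starRingEnd ℂ) (Complex.Gamma z) := by
    rw [← hconj, Complex.Gamma_conj]
  have h3 : Complex.Gamma z * (starRingEnd ℂ) (Complex.Gamma z) = ((A : ℝ) : ℂ) := by
    rw [Complex.mul_conj]
    norm_cast
    exact (Complex.sq_norm _).symm
  have hsin : Complex.sin ((π:ℂ) * z) = ((Real.sinh (π * ν / 2) : ℝ) : ℂ) * Complex.I := by
    have harg : (π:ℂ) * z = ((π * ν / 2 : ℝ) : ℂ) * Complex.I := by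
      rw [hzdef]; push_cast; ring
    rw [harg, Complex.sin_mul_I, Complex.ofReal_sinh]
  have hrefl := Complex.Gamma_mul_Gamma_one_sub z
  rw [h1, h2, hsin] at hrefl
  have h4 : (-z) * ((A : ℝ) : ℂ) = (π:ℂ) / (((Real.sinh (π * ν / 2) : ℝ) : ℂ) * Complex.I) := by
    rw [← h3]; linear_combination hrefl
  have hsinh : (0:ℝ) < Real.sinh (π * ν / 2) := by positivity
  have hsinhc : ((Real.sinh (π * ν / 2) : ℝ) : ℂ) ≠ 0 := Complex.ofReal_ne_zero.2 hsinh.ne'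
  have key : ((ν:ℂ)/2) * ((A : ℝ) : ℂ) * ((Real.sinh (π * ν / 2) : ℝ) : ℂ) = (π:ℂ) := by
    rw [eq_div_iff (mul_ne_zero hsinhc Complex.I_ne_zero)] at h4
    rw [hzdef] at h4
    have hI2 : Complex.I^2 = -1 := Complex.I_sq
    linear_combination h4 + (↑ν / 2 * ((A:ℝ):ℂ) * ↑(Real.sinh (π * ν / 2))) * hI2
  have keyr : (ν/2) * A * Real.sinh (π * ν / 2) = π := by exact_mod_cast key
  rw [eq_div_iff (by positivity)]
  linear_combination 2 * keyr

lemma aux_gamma1 (ν : ℝ) (hν : 0 < ν) :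
    ‖Complex.Gamma ((1 + ↑ν * Complex.I) / 2)‖ ^ 2
      = π / Real.cosh (π * ν / 2) := by
  set z : ℂ := (1 + ↑ν * Complex.I) / 2 with hzdef
  set A : ℝ := ‖Complex.Gamma z‖ ^ 2 with hAdef
  have hc2 : (starRingEnd ℂ) 2 = 2 := map_ofNat _ 2
  have hconj : (starRingEnd ℂ) z = 1 - z := by
    simp only [hzdef, map_div₀, map_add, map_mul, map_one, Complex.conj_ofReal,
      Complex.conj_I, hc2]
    ring
  have h1 : Complex.Gamma (1 - z) = (starRingEnd ℂ) (Complex.Gamma z) := by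
    rw [← hconj, Complex.Gamma_conj]
  have h3 : Complex.Gamma z * (starRingEnd ℂ) (Complex.Gamma z) = ((A : ℝ) : ℂ) := by
    rw [Complex.mul_conj]
    norm_cast
    exact (Complex.sq_norm _).symm
  have hsin : Complex.sin ((π:ℂ) * z) = ((Real.cosh (π * ν / 2) : ℝ) : ℂ) := by
    have harg : (π:ℂ) * z = (π/2 : ℂ) + ((π * ν / 2 : ℝ) : ℂ) * Complex.I := by
      rw [hzdef]; push_cast; ring
    rw [harg, Complex.sin_add, Complex.sin_pi_div_two, Complex.cos_pi_div_two,
      Complex.cos_mul_I, Complex.ofReal_cosh]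
    ring
  have hrefl := Complex.Gamma_mul_Gamma_one_sub z
  rw [h1, h3, hsin] at hrefl
  have hcosh : (0:ℝ) < Real.cosh (π * ν / 2) := Real.cosh_pos _
  have hcoshc : ((Real.cosh (π * ν / 2) : ℝ) : ℂ) ≠ 0 := Complex.ofReal_ne_zero.2 hcosh.ne'
  rw [eq_div_iff hcoshc] at hrefl
  have : A * Real.cosh (π * ν / 2) = π := by exact_mod_cast hrefl
  rw [eq_div_iff hcosh.ne']
  exact this

/-- Closed form for the Taylor coefficients of t -> exp(-nu * arccos t) in terms of the
complex Gamma function. -/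
theorem exp_arccos_taylor_coeffs (ν : ℝ) (hν : 0 < ν) (α : ℕ → ℝ)
    (hα : ∀ t ∈ Set.Ioo (-1 : ℝ) 1,
      HasSum (fun k : ℕ => α k * t ^ k) (Real.exp (-ν * Real.arccos t))) :
    ∀ k : ℕ,
      α k = (if Even k then ν * Real.exp (-π * ν / 2) * Real.sinh (π * ν / 2) / (2 * π)
             else ν * Real.exp (-π * ν / 2) * Real.cosh (π * ν / 2) / (2 * π)) *
        ((2 : ℝ) ^ k / (Nat.factorial k : ℝ)) *
        ‖Complex.Gamma (((k : ℂ) + ν * Complex.I) / 2)‖ ^ 2 := by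
  set β : ℕ → ℝ := fun k =>
    (if Even k then ν * Real.exp (-π * ν / 2) * Real.sinh (π * ν / 2) / (2 * π)
     else ν * Real.exp (-π * ν / 2) * Real.cosh (π * ν / 2) / (2 * π)) *
      ((2 : ℝ) ^ k / (Nat.factorial k : ℝ)) *
      ‖Complex.Gamma (((k : ℂ) + ν * Complex.I) / 2)‖ ^ 2 with hβdef
  have hπ : (0:ℝ) < π := Real.pi_pos
  have hsinh : (0:ℝ) < Real.sinh (π * ν / 2) := by positivity
  have hcosh : (0:ℝ) < Real.cosh (π * ν / 2) := Real.cosh_pos _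
  have hβ0 : β 0 = Real.exp (-ν * (π/2)) := by
    have e0 : (((0:ℕ) : ℂ) + ν * Complex.I) / 2 = (↑ν * Complex.I) / 2 := by norm_num
    rw [hβdef]
    simp only [e0, aux_gamma0 ν hν, if_pos (Even.zero), Nat.factorial_zero, pow_zero]
    rw [show -ν * (π/2) = -π * ν / 2 by ring]
    field_simp
    ring
  have hβ1 : β 1 = ν * Real.exp (-ν * (π/2)) := by
    have e1 : (((1:ℕ) : ℂ) + ν * Complex.I) / 2 = (1 + ↑ν * Complex.I) / 2 := by norm_num
    rw [hβdef]
    simp only [e1, aux_gamma1 ν hν, if_neg (Nat.not_even_one), Nat.factorial_one, pow_one]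
    rw [show -ν * (π/2) = -π * ν / 2 by ring]
    field_simp
    ring
  have hβrec : ∀ n : ℕ, ((n:ℝ)+2) * ((n:ℝ)+1) * β (n+2) = ((n:ℝ)^2 + ν^2) * β n := by
    intro n
    have hg := aux_gammarec ν hν n
    have ec : (((n+2:ℕ) : ℂ) + ν * Complex.I) / 2 = (((n:ℕ)+2 : ℂ) + ν * Complex.I) / 2 := by
      push_cast; ring
    have hiff : Even (n+2) ↔ Even n := by simp [parity_simps]
    rw [hβdef]
    simp only [ec, hg, hiff]
    rw [Nat.factorial_succ (n+1), Nat.factorial_succ n]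
    have hfac : ((Nat.factorial n : ℝ)) ≠ 0 := Nat.cast_ne_zero.2 (Nat.factorial_ne_zero n)
    push_cast
    set C := (if Even n then ν * Real.exp (-π * ν / 2) * Real.sinh (π * ν / 2) / (2 * π)
     else ν * Real.exp (-π * ν / 2) * Real.cosh (π * ν / 2) / (2 * π)) with hC
    field_simp
    ring
  have h0 := aux_alpha01 ν α hα
  have key : ∀ n, α n = β n ∧ α (n+1) = β (n+1) := by
    intro n
    induction n with
    | zero => exact ⟨h0.1.trans hβ0.symm, h0.2.trans hβ1.symm⟩
    | succ n ih =>
      refine ⟨ih.2, ?_⟩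
      have h1 := aux_alpha_rec ν α hα n
      have h2 := hβrec n
      have hne : ((n:ℝ)+2) * ((n:ℝ)+1) ≠ 0 := by positivity
      apply mul_left_cancel₀ hne
      have h3 : ((n:ℝ)^2 + ν^2) * α n = ((n:ℝ)^2 + ν^2) * β n := by rw [ih.1]
      push_cast
      linarith [h1, h2, h3]
  intro k
  exact (key k).1
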